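/- arXiv:2605.03965 — 4 statements merged into one kernel-verified Lean document; each statement's English description precedes it below -/
import Mathlib

section
/- For all integers t ≥ 3 and ℓ ≥ 2, every {P_t, K_{2,ℓ}}-free graph G with n ≥ 2 vertices has a vertex v such that α(G[N_G[v]]) ≤ (t−1)ℓ·log₂ n. -/
open SimpleGraph

/-- A set of vertices is independent (pairwise nonadjacent). -/
def IndepSet {V : Type*} (G : SimpleGraph V) (s : Set V) : Prop :=
  s.Pairwise fun a b => ¬ G.Adj a b

/-- The independence number of the subgraph of `G` induced by `S`. -/
noncomputable def indepNumOn {V : Type*} (G : SimpleGraph V) (S : Set V) : ℕ :=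
  sSup {n | ∃ s : Finset V, ↑s ⊆ S ∧ IndepSet G ↑s ∧ s.card = n}

/-- The independence number of `G`. -/
noncomputable def indepNum {V : Type*} (G : SimpleGraph V) : ℕ :=
  indepNumOn G Set.univ

/-- `G` contains no induced subgraph isomorphic to `H`. -/
def InducedFree {W V : Type*} (H : SimpleGraph W) (G : SimpleGraph V) : Prop :=
  IsEmpty (H ↪g G)

/-- The closed neighborhood of a vertex. -/
def closedNbhd {V : Type*} (G : SimpleGraph V) (v : V) : Set V :=
  insert v (G.neighborSet v)

/-- A tree-decomposition of `G` with nodes indexed by `ι`: a tree `T` together with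
bags such that every vertex appears in a nonempty connected collection of bags and
every edge is contained in some bag. -/
structure TreeDecomp {V : Type*} (G : SimpleGraph V) (ι : Type*) where
  tree : SimpleGraph ι
  isTree : tree.IsTree
  bag : ι → Set V
  subtree : ∀ v : V, (tree.induce {t | v ∈ bag t}).Connected
  covers : ∀ ⦃u v : V⦄, G.Adj u v → ∃ t, u ∈ bag t ∧ v ∈ bag t

/-!
Gyárfás' path argument: in a `P_t`-free graph every vertex set `A` either has a vertex adjacent
to all of `A`, or contains a set `D` of fewer than `t` vertices (an induced path) such that some
nonempty union `B` of components of `A ∖ N[D]` holds at most half of `A`. For `v ∈ B`, every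
vertex of `N[v] ∩ A` outside `B` is a common neighbour of `v` and some `d ∈ D` nonadjacent to `v`,
and by `K_{2,ℓ}`-freeness each `d` contributes fewer than `ℓ` independent vertices. So passing
from `A` to `B` halves `|A|` and lowers `α(N[v] ∩ ·)` by at most `(t - 1)ℓ`, while removing a
dominating vertex lowers it by nothing; recursing down gives the bound `(t - 1)ℓ log₂ n`.
-/

section

variable {V : Type*} {G : SimpleGraph V}

lemma mem_closedNbhd {v x : V} : x ∈ closedNbhd G v ↔ x = v ∨ G.Adj v x := Iff.rfl

section IndepNum

lemma indepNumOn_le {S : Set V} {n : ℕ}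
    (h : ∀ s : Finset V, ↑s ⊆ S → IndepSet G ↑s → s.card ≤ n) : indepNumOn G S ≤ n := by
  refine csSup_le ⟨0, ∅, by simp, by simp [IndepSet], rfl⟩ ?_
  rintro _ ⟨s, hsS, hs, rfl⟩
  exact h s hsS hs

variable [Finite V]

lemma bddAbove_indepSetCards (S : Set V) :
    BddAbove {n | ∃ s : Finset V, ↑s ⊆ S ∧ IndepSet G ↑s ∧ s.card = n} := by
  refine ⟨Nat.card V, ?_⟩
  rintro _ ⟨s, -, -, rfl⟩
  simpa using Set.ncard_le_card (s : Set V)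

lemma card_le_indepNumOn {S : Set V} {s : Finset V} (hsS : ↑s ⊆ S) (hs : IndepSet G ↑s) :
    s.card ≤ indepNumOn G S :=
  le_csSup (bddAbove_indepSetCards S) ⟨s, hsS, hs, rfl⟩

lemma exists_indepSet_card_eq_indepNumOn (S : Set V) :
    ∃ s : Finset V, ↑s ⊆ S ∧ IndepSet G ↑s ∧ s.card = indepNumOn G S :=
  Nat.sSup_mem (s := {n | ∃ s : Finset V, (s : Set V) ⊆ S ∧ IndepSet G ↑s ∧ s.card = n})
    ⟨0, ∅, by simp, by simp [IndepSet], rfl⟩ (bddAbove_indepSetCards S)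

lemma indepNumOn_mono {S T : Set V} (h : S ⊆ T) : indepNumOn G S ≤ indepNumOn G T :=
  indepNumOn_le fun _ hsS hs => card_le_indepNumOn (hsS.trans h) hs

lemma indepNumOn_le_ncard (S : Set V) : indepNumOn G S ≤ S.ncard := by
  obtain ⟨s, hsS, -, hs⟩ := exists_indepSet_card_eq_indepNumOn (G := G) S
  rw [← hs, ← Set.ncard_coe_finset]
  exact Set.ncard_le_ncard hsS

lemma indepNumOn_union_le (S T : Set V) :
    indepNumOn G (S ∪ T) ≤ indepNumOn G S + indepNumOn G T := by
  classical
  refine indepNumOn_le fun s hs hind => ?_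
  rw [← s.card_filter_add_card_filter_not (· ∈ S)]
  refine add_le_add (card_le_indepNumOn ?_ (hind.mono ?_)) (card_le_indepNumOn ?_ (hind.mono ?_))
  all_goals intro x hx; simp only [Finset.coe_filter, Set.mem_ofPred_eq] at hx
  · exact hx.2
  · exact hx.1
  · exact (hs hx.1).resolve_left hx.2
  · exact hx.1

lemma indepNumOn_biUnion_le {ι : Type*} {D : Set ι} (hD : D.Finite) {T : ι → Set V} {k : ℕ}
    (h : ∀ d ∈ D, indepNumOn G (T d) ≤ k) : indepNumOn G (⋃ d ∈ D, T d) ≤ D.ncard * k := by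
  induction D, hD using Set.Finite.induction_on with
  | empty => simpa using indepNumOn_le_ncard (G := G) ∅
  | @insert a D haD hD ih =>
    rw [Set.biUnion_insert, Set.ncard_insert_of_notMem haD hD, add_mul, one_mul, add_comm]
    exact (indepNumOn_union_le _ _).trans (add_le_add
      (h a (Set.mem_insert a D)) (ih fun d hd => h d (Set.mem_insert_of_mem a hd)))

lemma indepNumOn_le_indepNumOn_diff_singleton {S : Set V} {u v : V} (hS : S ⊆ closedNbhd G u)
    (hv : v ∈ S) (hvu : v ≠ u) : indepNumOn G S ≤ indepNumOn G (S \ {u}) := by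
  obtain ⟨s, hsS, hind, hs⟩ := exists_indepSet_card_eq_indepNumOn (G := G) S
  rw [← hs]
  by_cases hus : u ∈ s
  · -- `u` is adjacent to every other vertex of `S`, so an independent set through `u` is `{u}`
    have hsu : s ⊆ {u} := fun x hx => Finset.mem_singleton.mpr <| by_contra fun hxu =>
      hind hx hus hxu (((mem_closedNbhd.mp (hS (hsS hx))).resolve_left hxu).symm)
    calc s.card ≤ ({v} : Finset V).card := by simpa using Finset.card_le_card hsu
      _ ≤ _ := card_le_indepNumOn (by simpa using And.intro hv hvu) (by simp [IndepSet])
  · exact card_le_indepNumOn (fun x hx => ⟨hsS hx, fun hxu => hus (by simp_all)⟩) hind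

lemma indepNumOn_closedNbhd_inter_le_sdiff_singleton {A : Set V} {u v : V}
    (hu : A ⊆ closedNbhd G u) (hv : v ∈ A \ {u}) :
    indepNumOn G (closedNbhd G v ∩ A) ≤ indepNumOn G (closedNbhd G v ∩ (A \ {u})) := by
  rw [← Set.inter_sdiff_assoc]
  exact indepNumOn_le_indepNumOn_diff_singleton (Set.inter_subset_right.trans hu)
    ⟨Or.inl rfl, hv.1⟩ hv.2

end IndepNum

section CompleteBipartite

lemma not_inducedFree_completeBipartiteGraph {α β : Type*} {a : α → V} {b : β → V}
    (ha_inj : a.Injective) (hb_inj : b.Injective)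
    (ha : ∀ i j, ¬ G.Adj (a i) (a j)) (hb : ∀ i j, ¬ G.Adj (b i) (b j))
    (hab : ∀ i j, G.Adj (a i) (b j)) : ¬ InducedFree (completeBipartiteGraph α β) G := by
  refine fun hK => hK.false ⟨⟨Sum.elim a b, ha_inj.sumElim hb_inj fun i j => (hab i j).ne⟩, ?_⟩
  rintro (i | i) (j | j) <;> simp [ha, hb, hab, (hab _ _).symm]

variable {ℓ : ℕ}

lemma InducedFree.card_lt_of_subset_commonNeighbors
    (hK : InducedFree (completeBipartiteGraph (Fin 2) (Fin ℓ)) G) {u d : V} (hud : u ≠ d)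
    (hadj : ¬ G.Adj u d) {s : Finset V} (hs : IndepSet G ↑s)
    (hsud : ↑s ⊆ G.commonNeighbors u d) : s.card < ℓ := by
  by_contra! hℓs
  obtain ⟨b⟩ := Function.Embedding.nonempty_of_card_le (α := Fin ℓ) (β := s) (by simpa using hℓs)
  refine not_inducedFree_completeBipartiteGraph (a := ![u, d])
    (b := Subtype.val ∘ b) ?_ (Subtype.val_injective.comp b.injective) ?_ ?_ ?_ hK
  · intro i j; fin_cases i <;> fin_cases j <;> simp [hud, hud.symm]
  · intro i j; fin_cases i <;> fin_cases j <;> simp [hadj, G.adj_comm d u]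
  · intro i j
    rcases eq_or_ne (b i) (b j) with h | h
    · simp [h]
    · exact hs (b i).2 (b j).2 (Subtype.coe_ne_coe.mpr h)
  · intro i j
    have := (G.mem_commonNeighbors).mp (hsud (b j).2)
    fin_cases i
    · exact this.1
    · exact this.2

lemma InducedFree.indepNumOn_commonNeighbors_lt [Finite V]
    (hK : InducedFree (completeBipartiteGraph (Fin 2) (Fin ℓ)) G) {u d : V} (hud : u ≠ d)
    (hadj : ¬ G.Adj u d) : indepNumOn G (G.commonNeighbors u d) < ℓ := by
  obtain ⟨s, hsS, hs, hcard⟩ := exists_indepSet_card_eq_indepNumOn (G := G) (G.commonNeighbors u d)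
  exact hcard ▸ hK.card_lt_of_subset_commonNeighbors hud hadj hs hsS

end CompleteBipartite

section Components

/-- `B` is a union of connected components of `G[S]`. -/
def IsClosedIn (G : SimpleGraph V) (S B : Set V) : Prop :=
  B ⊆ S ∧ ∀ ⦃x y⦄, x ∈ B → y ∈ S → G.Adj x y → y ∈ B

/-- `G[C]` is connected (or empty). -/
def InducesPreconnected (G : SimpleGraph V) (C : Set V) : Prop :=
  ∀ B, B.Nonempty → IsClosedIn G C B → B = C

lemma isClosedIn_self (S : Set V) : IsClosedIn G S S :=
  ⟨subset_rfl, fun _ _ _ hy _ => hy⟩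

lemma IsClosedIn.trans {S C B : Set V} (hC : IsClosedIn G S C) (hB : IsClosedIn G C B) :
    IsClosedIn G S B :=
  ⟨hB.1.trans hC.1, fun _ _ hx hy hxy => hB.2 hx (hC.2 (hB.1 hx) hy hxy) hxy⟩

lemma IsClosedIn.diff {S C B T : Set V} (hC : IsClosedIn G S C) (hB : IsClosedIn G (C \ T) B) :
    IsClosedIn G (S \ T) B :=
  ⟨hB.1.trans (Set.sdiff_subset_sdiff_left hC.1),
    fun _ _ hx hy hxy => hB.2 hx ⟨hC.2 (hB.1 hx).1 hy.1 hxy, hy.2⟩ hxy⟩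

lemma InducesPreconnected.exists_adj {C B : Set V} (hC : InducesPreconnected G C) (hBC : B ⊆ C)
    (hB : B.Nonempty) (hne : B ≠ C) : ∃ y ∈ B, ∃ x ∈ C, x ∉ B ∧ G.Adj y x := by
  by_contra! h
  exact hne (hC B hB ⟨hBC, fun y x hy hx hyx => by_contra fun hxB => h y hy x hx hxB hyx⟩)

lemma exists_isClosedIn_inducesPreconnected [Finite V] {S : Set V} (hS : S.Nonempty) :
    ∃ C, C.Nonempty ∧ IsClosedIn G S C ∧ InducesPreconnected G C := by
  -- a minimal nonempty closed subset is a component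
  obtain ⟨C, -, hCmin⟩ := exists_minimal_le_of_wellFoundedLT
    (fun C => C.Nonempty ∧ IsClosedIn G S C) S ⟨hS, isClosedIn_self S⟩
  exact ⟨C, hCmin.1.1, hCmin.1.2, fun B hB hBC =>
    hCmin.eq_of_le ⟨hB, hCmin.1.2.trans hBC⟩ hBC.1⟩

def outsideNbhd (G : SimpleGraph V) (A D : Set V) : Set V :=
  A \ ⋃ d ∈ D, closedNbhd G d

@[simp]
lemma outsideNbhd_empty (A : Set V) : outsideNbhd G A ∅ = A := by
  simp [outsideNbhd]

lemma outsideNbhd_insert (A D : Set V) (u : V) :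
    outsideNbhd G A (insert u D) = outsideNbhd G A D \ closedNbhd G u := by
  rw [outsideNbhd, outsideNbhd, Set.biUnion_insert, Set.sdiff_sdiff, Set.union_comm]

lemma outsideNbhd_image_Iic (A : Set V) (w : ℕ → V) (m : ℕ) :
    outsideNbhd G A (w '' Set.Iic m) = outsideNbhd G A (w '' Set.Iio m) \ closedNbhd G (w m) := by
  rw [← Set.Iio_insert, Set.image_insert_eq, outsideNbhd_insert]

end Components

section InducedPath

def IsInducedPath (G : SimpleGraph V) (w : ℕ → V) (m : ℕ) : Prop :=
  Set.InjOn w (Set.Iic m) ∧ ∀ i ≤ m, ∀ j ≤ m, (G.Adj (w i) (w j) ↔ i + 1 = j ∨ j + 1 = i)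

lemma isInducedPath_zero (v : V) : IsInducedPath G (fun _ => v) 0 :=
  ⟨fun i hi j hj _ => (Nat.le_zero.mp hi).trans (Nat.le_zero.mp hj).symm, by simp⟩

lemma IsInducedPath.snoc {w : ℕ → V} {m : ℕ} {x : V} (hw : IsInducedPath G w m)
    (hx : G.Adj (w m) x) (hfar : ∀ i < m, x ∉ closedNbhd G (w i)) :
    IsInducedPath G (Function.update w (m + 1) x) (m + 1) := by
  have hfar' : ∀ i < m, x ≠ w i ∧ ¬ G.Adj (w i) x := fun i hi => by
    simpa [mem_closedNbhd, not_or] using hfar i hi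
  constructor
  · intro i hi j hj hij
    simp only [Set.mem_Iic, Function.update_apply] at hi hj hij
    split_ifs at hij with hi' hj' hj'
    · omega
    · rcases Nat.lt_or_eq_of_le (by omega : j ≤ m) with hjm | rfl
      · exact absurd hij (hfar' j hjm).1
      · exact absurd hij.symm hx.ne
    · rcases Nat.lt_or_eq_of_le (by omega : i ≤ m) with him | rfl
      · exact absurd hij.symm (hfar' i him).1
      · exact absurd hij hx.ne
    · exact hw.1 (by simpa using (by omega : i ≤ m)) (by simpa using (by omega : j ≤ m)) hij
  · intro i hi j hj
    simp only [Function.update_apply]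
    split_ifs with hi' hj' hj'
    · simp; omega
    · rcases Nat.lt_or_eq_of_le (by omega : j ≤ m) with hjm | rfl
      · exact iff_of_false (fun h => (hfar' j hjm).2 h.symm) (by omega)
      · exact iff_of_true hx.symm (by omega)
    · rcases Nat.lt_or_eq_of_le (by omega : i ≤ m) with him | rfl
      · exact iff_of_false (hfar' i him).2 (by omega)
      · exact iff_of_true hx (by omega)
    · exact hw.2 i (by omega) j (by omega)

lemma IsInducedPath.lt_of_inducedFree {w : ℕ → V} {m t : ℕ} (hw : IsInducedPath G w m)
    (hP : InducedFree (pathGraph t) G) : m + 1 < t := by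
  by_contra! htm
  refine hP.false ⟨⟨fun i : Fin t => w i, fun i j hij => Fin.ext <|
    hw.1 (by simp; omega) (by simp; omega) hij⟩, fun {i j} => ?_⟩
  exact (hw.2 i (by omega) j (by omega)).trans pathGraph_adj.symm

lemma ncard_image_Iic_le (w : ℕ → V) (m : ℕ) : (w '' Set.Iic m).ncard ≤ m + 1 :=
  (Set.ncard_image_le (Set.finite_Iic m)).trans (Set.ncard_Iic_nat m).le

end InducedPath

section Gyarfas

structure IsSmallPiece (G : SimpleGraph V) (A D B : Set V) : Prop where
  nonempty : B.Nonempty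
  two_mul_ncard_le : 2 * B.ncard ≤ A.ncard
  isClosedIn : IsClosedIn G (outsideNbhd G A D) B

/-- The invariant of Gyárfás' path argument: the induced path `w` is extended into the component
`C` holding more than half of `A` until the components left after removing `N[w m]` are small. -/
structure GyarfasState (G : SimpleGraph V) (A : Set V) (w : ℕ → V) (m : ℕ) (C : Set V) : Prop where
  isInducedPath : IsInducedPath G w m
  last_mem : w m ∈ A
  isClosedIn : IsClosedIn G (outsideNbhd G A (w '' Set.Iio m)) C
  inducesPreconnected : InducesPreconnected G C
  ncard_lt : A.ncard < 2 * C.ncard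
  meets : (C ∩ closedNbhd G (w m)).Nonempty

namespace GyarfasState

variable {A C : Set V} {w : ℕ → V} {m : ℕ}

/-- `A ∖ N[w m]` misses all of `C`, which holds more than half of `A`. -/
lemma isSmallPiece_of_subset_closedNbhd [Finite V] (h : GyarfasState G A w m C)
    (hC : C ⊆ closedNbhd G (w m)) (hne : (A \ closedNbhd G (w m)).Nonempty) :
    IsSmallPiece G A {w m} (A \ closedNbhd G (w m)) := by
  refine ⟨hne, ?_, by simpa [outsideNbhd] using isClosedIn_self (G := G) _⟩
  have hCA : C ⊆ A := h.isClosedIn.1.trans Set.sdiff_subset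
  have hdisj : Disjoint (A \ closedNbhd G (w m)) C :=
    Set.disjoint_of_subset_right hC Set.disjoint_sdiff_left
  have := Set.ncard_le_ncard (Set.union_subset (Set.sdiff_subset (t := closedNbhd G (w m))) hCA)
  rw [Set.ncard_union_eq hdisj] at this
  have := h.ncard_lt
  omega

lemma extend (h : GyarfasState G A w m C) {C' : Set V}
    (hC' : IsClosedIn G (C \ closedNbhd G (w m)) C') (hne : C'.Nonempty)
    (hconn : InducesPreconnected G C') (hlarge : A.ncard < 2 * C'.ncard) :
    ∃ x ∈ C, x ∉ C' ∧ GyarfasState G A (Function.update w (m + 1) x) (m + 1) C' := by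
  obtain ⟨c, hcC, hcw⟩ := h.meets
  have hC'C : C' ⊆ C := hC'.1.trans Set.sdiff_subset
  obtain ⟨y, hy, x, hxC, hxC', hyx⟩ :=
    h.inducesPreconnected.exists_adj hC'C hne fun e => (hC'.1 (e ▸ hcC)).2 hcw
  have hyw : y ∉ closedNbhd G (w m) := (hC'.1 hy).2
  -- `x` lies in `N[w m]`, as otherwise `C'` would absorb it; and `x ≠ w m` since `y ∉ N[w m]`
  have hwx : G.Adj (w m) x := by
    have hxw : x ∈ closedNbhd G (w m) := by_contra fun hxw => hxC' (hC'.2 hy ⟨hxC, hxw⟩ hyx)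
    refine (mem_closedNbhd.mp hxw).resolve_left ?_
    rintro rfl
    exact hyw (mem_closedNbhd.mpr (Or.inr hyx.symm))
  have hxout := (h.isClosedIn.1 hxC).2
  have hupdate : Function.update w (m + 1) x '' Set.Iio (m + 1) = w '' Set.Iic m := by
    rw [← Set.Iio_add_one_eq_Iic]
    exact Set.image_congr fun i hi => Function.update_of_ne (ne_of_lt hi) _ _
  refine ⟨x, hxC, hxC', ⟨h.isInducedPath.snoc hwx fun i hi hxi => hxout ?_, ?_, ?_, hconn,
    hlarge, ⟨y, hy, ?_⟩⟩⟩
  · exact Set.mem_biUnion (Set.mem_image_of_mem w hi) hxi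
  · simpa using (h.isClosedIn.1 hxC).1
  · rw [hupdate, outsideNbhd_image_Iic]
    exact h.isClosedIn.diff hC'
  · simpa [mem_closedNbhd] using Or.inr hyx.symm

lemma step [Finite V] (h : GyarfasState G A w m C) :
    (∃ u ∈ A, A ⊆ closedNbhd G u) ∨ (∃ D ⊆ w '' Set.Iic m, ∃ B, IsSmallPiece G A D B) ∨
      ∃ x C', C'.ncard < C.ncard ∧ GyarfasState G A (Function.update w (m + 1) x) (m + 1) C' := by
  by_cases hC : C ⊆ closedNbhd G (w m)
  · by_cases hne : (A \ closedNbhd G (w m)).Nonempty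
    · exact Or.inr <| Or.inl ⟨{w m}, by simpa using ⟨m, le_rfl, rfl⟩, _,
        h.isSmallPiece_of_subset_closedNbhd hC hne⟩
    · refine Or.inl ⟨w m, h.last_mem, ?_⟩
      simpa [Set.not_nonempty_iff_eq_empty, Set.sdiff_eq_empty] using hne
  obtain ⟨C', hne, hC', hconn⟩ :=
    exists_isClosedIn_inducesPreconnected (G := G) (Set.nonempty_of_not_subset hC)
  by_cases hsmall : 2 * C'.ncard ≤ A.ncard
  · refine Or.inr <| Or.inl ⟨_, subset_rfl, C', hne, hsmall, ?_⟩
    rw [outsideNbhd_image_Iic]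
    exact h.isClosedIn.diff hC'
  · obtain ⟨x, hxC, hxC', h'⟩ := h.extend hC' hne hconn (not_le.mp hsmall)
    exact Or.inr <| Or.inr ⟨x, C', Set.ncard_lt_ncard <|
      (hC'.1.trans Set.sdiff_subset).ssubset_of_not_subset fun hCC' => hxC' (hCC' hxC), h'⟩

lemma dominating_or_smallPiece [Finite V] {t : ℕ} (hP : InducedFree (pathGraph t) G)
    (h : GyarfasState G A w m C) :
    (∃ u ∈ A, A ⊆ closedNbhd G u) ∨ ∃ D B, D.ncard < t ∧ IsSmallPiece G A D B := by
  induction hn : C.ncard using Nat.strong_induction_on generalizing w m C with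
  | _ n ih =>
  rcases h.step with hdom | ⟨D, hD, B, hB⟩ | ⟨x, C', hlt, h'⟩
  · exact Or.inl hdom
  · exact Or.inr ⟨D, B, ((Set.ncard_le_ncard hD).trans (ncard_image_Iic_le w m)).trans_lt
      (h.isInducedPath.lt_of_inducedFree hP), hB⟩
  · exact ih _ (hn ▸ hlt) h' rfl

end GyarfasState

theorem exists_dominating_or_smallPiece [Finite V] {t : ℕ} (hP : InducedFree (pathGraph t) G)
    {A : Set V} (hA : A.Nonempty) :
    (∃ u ∈ A, A ⊆ closedNbhd G u) ∨ ∃ D B, D.ncard < t ∧ IsSmallPiece G A D B := by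
  obtain ⟨C, ⟨c, hc⟩, hCA, hconn⟩ := exists_isClosedIn_inducesPreconnected (G := G) hA
  have hpath := isInducedPath_zero (G := G) c
  by_cases hsmall : 2 * C.ncard ≤ A.ncard
  · exact Or.inr ⟨∅, C, by simpa using (hpath.lt_of_inducedFree hP).trans' one_pos,
      ⟨c, hc⟩, hsmall, by simpa using hCA⟩
  · exact GyarfasState.dominating_or_smallPiece hP
      ⟨hpath, hCA.1 hc, by simpa using hCA, hconn, not_le.mp hsmall, c, hc, Or.inl rfl⟩

end Gyarfas

section Recursion

variable [Finite V]

lemma IsClosedIn.indepNumOn_closedNbhd_inter_le {ℓ : ℕ}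
    (hK : InducedFree (completeBipartiteGraph (Fin 2) (Fin ℓ)) G) {A B D : Set V}
    (hB : IsClosedIn G (outsideNbhd G A D) B) {v : V} (hv : v ∈ B) :
    indepNumOn G (closedNbhd G v ∩ A) ≤ indepNumOn G (closedNbhd G v ∩ B) + D.ncard * ℓ := by
  have hvD : ∀ d ∈ D, v ∉ closedNbhd G d := fun d hd hvd =>
    (hB.1 hv).2 (Set.mem_biUnion hd hvd)
  -- a neighbour of `v` in `A ∖ B` lies outside `A ∖ N[D]`, so it is adjacent to some `d ∈ D`
  have hsub : closedNbhd G v ∩ A ⊆ (closedNbhd G v ∩ B) ∪ ⋃ d ∈ D, G.commonNeighbors v d := by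
    rintro x ⟨hxv, hxA⟩
    by_cases hxB : x ∈ B
    · exact Or.inl ⟨hxv, hxB⟩
    have hvx : G.Adj v x := (mem_closedNbhd.mp hxv).resolve_left (by rintro rfl; exact hxB hv)
    obtain ⟨d, hd, hxd⟩ : ∃ d ∈ D, x ∈ closedNbhd G d := by
      by_contra! hx
      exact hxB (hB.2 hv ⟨hxA, by simpa using hx⟩ hvx)
    have hdx : G.Adj d x := (mem_closedNbhd.mp hxd).resolve_left <| by
      rintro rfl
      exact hvD x hd (mem_closedNbhd.mpr (Or.inr hvx.symm))
    exact Or.inr (Set.mem_biUnion hd ((G.mem_commonNeighbors).mpr ⟨hvx, hdx⟩))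
  calc indepNumOn G (closedNbhd G v ∩ A)
      ≤ indepNumOn G ((closedNbhd G v ∩ B) ∪ ⋃ d ∈ D, G.commonNeighbors v d) :=
        indepNumOn_mono hsub
    _ ≤ indepNumOn G (closedNbhd G v ∩ B) + indepNumOn G (⋃ d ∈ D, G.commonNeighbors v d) :=
        indepNumOn_union_le _ _
    _ ≤ indepNumOn G (closedNbhd G v ∩ B) + D.ncard * ℓ := by
        gcongr
        refine indepNumOn_biUnion_le D.toFinite fun d hd => ?_
        have hvd := hvD d hd
        rw [mem_closedNbhd, not_or, G.adj_comm] at hvd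
        exact (hK.indepNumOn_commonNeighbors_lt hvd.1 hvd.2).le

def IsHalvable (G : SimpleGraph V) (c : ℝ) (A : Set V) : Prop :=
  (∃ u ∈ A, A ⊆ closedNbhd G u) ∨
    ∃ B ⊆ A, B.Nonempty ∧ 2 * B.ncard ≤ A.ncard ∧ ∀ v ∈ B,
      (indepNumOn G (closedNbhd G v ∩ A) : ℝ) ≤ indepNumOn G (closedNbhd G v ∩ B) + c

theorem isHalvable_of_inducedFree {t ℓ : ℕ} (hP : InducedFree (pathGraph t) G)
    (hK : InducedFree (completeBipartiteGraph (Fin 2) (Fin ℓ)) G) {A : Set V} (hA : A.Nonempty) :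
    IsHalvable G (((t : ℝ) - 1) * ℓ) A := by
  refine (exists_dominating_or_smallPiece hP hA).imp id ?_
  rintro ⟨D, B, hDt, hB⟩
  refine ⟨B, hB.isClosedIn.1.trans Set.sdiff_subset, hB.nonempty, hB.two_mul_ncard_le,
    fun v hv => ?_⟩
  have hD : (D.ncard : ℝ) ≤ t - 1 := by
    rw [le_sub_iff_add_le]
    exact_mod_cast hDt
  calc (indepNumOn G (closedNbhd G v ∩ A) : ℝ)
      ≤ indepNumOn G (closedNbhd G v ∩ B) + D.ncard * ℓ := by
        exact_mod_cast hB.isClosedIn.indepNumOn_closedNbhd_inter_le hK hv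
    _ ≤ indepNumOn G (closedNbhd G v ∩ B) + ((t : ℝ) - 1) * ℓ := by gcongr

omit [Finite V] in
lemma one_le_logb_two_max (x : ℝ) : 1 ≤ Real.logb 2 (max x 2) := by
  rw [Real.le_logb_iff_rpow_le one_lt_two (by positivity), Real.rpow_one]
  exact le_max_right _ _

omit [Finite V] in
lemma logb_two_max_add_one_le {x y : ℝ} (hxy : 2 * x ≤ y) (hy : 4 ≤ y) :
    Real.logb 2 (max x 2) + 1 ≤ Real.logb 2 (max y 2) := by
  have hmax : max x 2 ≤ y / 2 := max_le (by linarith) (by linarith)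
  calc Real.logb 2 (max x 2) + 1 ≤ Real.logb 2 (y / 2) + 1 := by gcongr; norm_num
    _ = Real.logb 2 (max y 2) := by
        rw [max_eq_left (by linarith), Real.logb_div (by positivity) two_ne_zero,
          Real.logb_self_eq_one one_lt_two, sub_add_cancel]

theorem exists_indepNumOn_closedNbhd_le_mul_logb {c : ℝ} (hc : 3 ≤ c)
    (hG : ∀ A : Set V, A.Nonempty → IsHalvable G c A) {A : Set V} (hA : A.Nonempty) :
    ∃ v ∈ A, (indepNumOn G (closedNbhd G v ∩ A) : ℝ) ≤ c * Real.logb 2 (max A.ncard 2) := by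
  induction hn : A.ncard using Nat.strong_induction_on generalizing A with
  | _ n ih =>
  obtain ⟨a, ha⟩ := hA
  by_cases hsmall : n ≤ 3
  · refine ⟨a, ha, ?_⟩
    have hα : indepNumOn G (closedNbhd G a ∩ A) ≤ 3 :=
      (indepNumOn_le_ncard _).trans <|
        (Set.ncard_le_ncard Set.inter_subset_right).trans (hn ▸ hsmall)
    calc (indepNumOn G (closedNbhd G a ∩ A) : ℝ) ≤ c * 1 := by
          rw [mul_one]; exact (Nat.cast_le.mpr hα).trans (by exact_mod_cast hc)
      _ ≤ _ := by gcongr; exact one_le_logb_two_max _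
  rcases hG A ⟨a, ha⟩ with ⟨u, hu, hdom⟩ | ⟨B, hBA, hB, hhalf, hcost⟩
  · have hcard : (A \ {u}).ncard = n - 1 := hn ▸ Set.ncard_sdiff_singleton_of_mem hu
    obtain ⟨v, hv, hbound⟩ := ih (n - 1) (by omega)
      (Set.nonempty_of_ncard_ne_zero (by omega)) hcard
    refine ⟨v, hv.1, ?_⟩
    calc (indepNumOn G (closedNbhd G v ∩ A) : ℝ)
        ≤ indepNumOn G (closedNbhd G v ∩ (A \ {u})) := by
          exact_mod_cast indepNumOn_closedNbhd_inter_le_sdiff_singleton hdom hv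
      _ ≤ c * Real.logb 2 (max ↑(n - 1) 2) := hbound
      _ ≤ c * Real.logb 2 (max n 2) := by
          gcongr
          · norm_num
          · exact n.sub_le 1
  · obtain ⟨v, hv, hbound⟩ := ih B.ncard (by omega) hB rfl
    refine ⟨v, hBA hv, ?_⟩
    calc (indepNumOn G (closedNbhd G v ∩ A) : ℝ)
        ≤ indepNumOn G (closedNbhd G v ∩ B) + c := hcost v hv
      _ ≤ c * (Real.logb 2 (max B.ncard 2) + 1) := by rw [mul_add_one]; gcongr
      _ ≤ c * Real.logb 2 (max n 2) := by
          gcongr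
          exact logb_two_max_add_one_le (by exact_mod_cast hn ▸ hhalf)
            (by exact_mod_cast (by omega : 4 ≤ n))

end Recursion

end

/-- For all integers `t ≥ 3` and `ℓ ≥ 2`, every `{P_t, K_{2,ℓ}}`-free graph
`G` with `n ≥ 2` vertices has a vertex `v` with `α(G[N_G[v]]) ≤ (t−1)ℓ·log₂ n`. -/
theorem stmt_6 (t ℓ : ℕ) (ht : 3 ≤ t) (hℓ : 2 ≤ ℓ)
    {V : Type} [Fintype V] (G : SimpleGraph V)
    (hP : InducedFree (pathGraph t) G)
    (hK : InducedFree (completeBipartiteGraph (Fin 2) (Fin ℓ)) G)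
    (hn : 2 ≤ Fintype.card V) :
    ∃ v : V, (indepNumOn G (closedNbhd G v) : ℝ) ≤
      ((t : ℝ) - 1) * ℓ * Real.logb 2 (Fintype.card V) := by
  have : Nonempty V := Fintype.card_pos_iff.mp (by omega)
  have hc : (3 : ℝ) ≤ ((t : ℝ) - 1) * ℓ := by
    have ht' : (3 : ℝ) ≤ t := by exact_mod_cast ht
    have hℓ' : (2 : ℝ) ≤ ℓ := by exact_mod_cast hℓ
    nlinarith
  obtain ⟨v, -, hv⟩ := exists_indepNumOn_closedNbhd_le_mul_logb hc
    (fun _ hA => isHalvable_of_inducedFree hP hK hA) Set.univ_nonempty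
  have hcard : max ((Set.univ : Set V).ncard : ℝ) 2 = Fintype.card V := by
    rw [Set.ncard_univ, Nat.card_eq_fintype_card]
    exact max_eq_left (by exact_mod_cast hn)
  rw [Set.inter_univ, hcard] at hv
  exact ⟨v, hv⟩
end

section
/- Let p and ℓ be positive integers and let H be a bipartite K_{ℓ,ℓ}-free graph with bipartition A, B, where |B| ≥ p·ℓ. Then at most ℓ−1 vertices from A have fewer than p non-neighbors in B. -/
open SimpleGraph

/-- `G` contains no induced subgraph isomorphic to `H`. -/
def Free {W V : Type*} (H : SimpleGraph W) (G : SimpleGraph V) : Prop :=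
  IsEmpty (H ↪g G)

/-!
If ℓ vertices of `A` each miss fewer than `p` vertices of `B`, together they miss at most
`ℓ(p - 1) ≤ |B| - ℓ` of them, so some ℓ vertices of `B` are adjacent to all ℓ. As `A` and `B` are
independent, these 2ℓ vertices induce `K_{ℓ,ℓ}`.
-/

open Finset

theorem IndepSet.not_adj {V : Type*} {H : SimpleGraph V} {s : Set V} (hs : IndepSet H s) {a b : V}
    (ha : a ∈ s) (hb : b ∈ s) : ¬ H.Adj a b :=
  fun hab => hs ha hb (H.ne_of_adj hab) hab

namespace SimpleGraph

variable {V : Type*} (H : SimpleGraph V)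

def completeBipartiteGraphEmbedding {S T : Finset V} (hS : IndepSet H S) (hT : IndepSet H T)
    (hST : ∀ a ∈ S, ∀ b ∈ T, H.Adj a b) : completeBipartiteGraph S T ↪g H where
  toFun := Sum.elim Subtype.val Subtype.val
  inj' := Subtype.val_injective.sumElim Subtype.val_injective fun a b hab =>
    H.ne_of_adj (hST a a.2 b b.2) hab
  map_rel_iff' := by
    rintro (a | a) (b | b) <;>
      simp [hS.not_adj, hT.not_adj, hST, (hST _ _ _ _).symm]

theorem not_free_completeBipartiteGraph {S T : Finset V} (hS : IndepSet H S)
    (hT : IndepSet H T) (hST : ∀ a ∈ S, ∀ b ∈ T, H.Adj a b) :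
    ¬ _root_.Free (completeBipartiteGraph (Fin #S) (Fin #T)) H := fun hfree =>
  hfree.false <| (completeBipartiteGraphEmbedding H hS hT hST).comp
    (completeBipartiteGraphCongr S.equivFin.symm T.equivFin.symm).toEmbedding

variable [DecidableRel H.Adj]

theorem card_le_card_filter_forall_adj_add_sum (S B : Finset V) :
    #B ≤ #{b ∈ B | ∀ a ∈ S, H.Adj a b} + ∑ a ∈ S, #{b ∈ B | ¬ H.Adj a b} := by
  classical
  calc #B ≤ #({b ∈ B | ∀ a ∈ S, H.Adj a b} ∪ S.biUnion fun a => {b ∈ B | ¬ H.Adj a b}) := by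
        refine card_le_card fun b hb => ?_
        by_cases h : ∀ a ∈ S, H.Adj a b
        · exact mem_union_left _ (mem_filter.2 ⟨hb, h⟩)
        · push Not at h
          obtain ⟨a, ha, hab⟩ := h
          exact mem_union_right _ (mem_biUnion.2 ⟨a, ha, mem_filter.2 ⟨hb, hab⟩⟩)
    _ ≤ _ := (card_union_le _ _).trans (Nat.add_le_add_left card_biUnion_le _)

theorem card_le_card_filter_forall_adj {S B : Finset V} {p : ℕ}
    (hS : ∀ a ∈ S, #{b ∈ B | ¬ H.Adj a b} < p) (hB : p * #S ≤ #B) :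
    #S ≤ #{b ∈ B | ∀ a ∈ S, H.Adj a b} := by
  have hsum : ∑ a ∈ S, #{b ∈ B | ¬ H.Adj a b} + #S ≤ p * #S := by
    calc ∑ a ∈ S, #{b ∈ B | ¬ H.Adj a b} + #S
        = ∑ a ∈ S, (#{b ∈ B | ¬ H.Adj a b} + 1) := by rw [sum_add_distrib, card_eq_sum_ones]
      _ ≤ ∑ _a ∈ S, p := sum_le_sum hS
      _ = p * #S := by rw [sum_const, smul_eq_mul, mul_comm]
  have := H.card_le_card_filter_forall_adj_add_sum S B
  omega

theorem card_filter_card_filter_not_adj_lt {p ℓ : ℕ} {A B : Finset V} (hA : IndepSet H A)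
    (hB : IndepSet H B) (hK : _root_.Free (completeBipartiteGraph (Fin ℓ) (Fin ℓ)) H)
    (hBcard : p * ℓ ≤ #B) : #{a ∈ A | #{b ∈ B | ¬ H.Adj a b} < p} < ℓ := by
  by_contra! hℓ
  obtain ⟨S, hS, rfl⟩ := exists_subset_card_eq hℓ
  have hSA : S ⊆ A := hS.trans (filter_subset _ _)
  have hSp : ∀ a ∈ S, #{b ∈ B | ¬ H.Adj a b} < p := fun a ha => (mem_filter.1 (hS ha)).2
  obtain ⟨T, hT, hTcard⟩ := exists_subset_card_eq (H.card_le_card_filter_forall_adj hSp hBcard)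
  have hTB : T ⊆ B := hT.trans (filter_subset _ _)
  refine H.not_free_completeBipartiteGraph (hA.mono (coe_subset.2 hSA))
    (hB.mono (coe_subset.2 hTB))
    (fun a ha b hb => (mem_filter.1 (hT hb)).2 a ha) ?_
  rwa [hTcard]

end SimpleGraph

theorem stmt_8_general (p ℓ : ℕ)
    {V : Type} (H : SimpleGraph V) [DecidableRel H.Adj]
    (A B : Finset V)
    (hA : IndepSet H ↑A) (hB : IndepSet H ↑B)
    (hK : _root_.Free (completeBipartiteGraph (Fin ℓ) (Fin ℓ)) H)
    (hBcard : p * ℓ ≤ B.card) :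
    (A.filter fun a => (B.filter fun b => ¬ H.Adj a b).card < p).card ≤ ℓ - 1 :=
  Nat.le_sub_one_of_lt (H.card_filter_card_filter_not_adj_lt hA hB hK hBcard)

/-- Let `p, ℓ` be positive integers and let `H` be a bipartite `K_{ℓ,ℓ}`-free
graph with bipartition `A, B` where `|B| ≥ p·ℓ`. Then at most `ℓ − 1` vertices from `A`
have fewer than `p` non-neighbors in `B`. -/
theorem stmt_8 (p ℓ : ℕ) (hp : 0 < p) (hℓ : 0 < ℓ)
    {V : Type} [Fintype V] [DecidableEq V] (H : SimpleGraph V) [DecidableRel H.Adj]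
    (A B : Finset V) (hdisj : Disjoint A B) (hunion : A ∪ B = Finset.univ)
    (hA : IndepSet H ↑A) (hB : IndepSet H ↑B)
    (hK : _root_.Free (completeBipartiteGraph (Fin ℓ) (Fin ℓ)) H)
    (hBcard : p * ℓ ≤ B.card) :
    (A.filter fun a => (B.filter fun b => ¬ H.Adj a b).card < p).card ≤ ℓ - 1 :=
  stmt_8_general p ℓ H A B hA hB hK hBcard
end

section
/- Let G be a P₅-free graph, let r ∈ V(G), and let x, y be two distinct nonadjacent neighbors of r. Then for every u ∈ U: if u is not adjacent to x, then u is complete to W_x, and if u is not adjacent to y, then u is complete to W_y. In particular, U₀ is complete to W_x ∪ W_y, U_x is complete to W_y, and U_y is complete to W_x. -/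
open SimpleGraph

/-- `N_r̄(v) = N(v) \\ N[r]`: the neighbors of `v` outside the closed neighborhood of `r`. -/
def Nbar {V : Type*} (G : SimpleGraph V) (r v : V) : Set V :=
  G.neighborSet v \ closedNbhd G r

/-- `M = N(r) ∪ N_r̄(x) ∪ N_r̄(y)`. -/
def Mset {V : Type*} (G : SimpleGraph V) (r x y : V) : Set V :=
  G.neighborSet r ∪ Nbar G r x ∪ Nbar G r y

/-- `U`: the neighbors of `r` having a neighbor outside `M ∪ {r}`. -/
def Uset {V : Type*} (G : SimpleGraph V) (r x y : V) : Set V :=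
  {u ∈ G.neighborSet r | (Nbar G r u \ (Nbar G r x ∪ Nbar G r y)).Nonempty}

/-- `U₀ = {u ∈ U | u ∉ N(x) ∪ N(y)}`. -/
def U0set {V : Type*} (G : SimpleGraph V) (r x y : V) : Set V :=
  {u ∈ Uset G r x y | u ∉ G.neighborSet x ∪ G.neighborSet y}

/-- `U_x = {u ∈ U | u ∈ N(x) \\ N(y)}`. -/
def Uxset {V : Type*} (G : SimpleGraph V) (r x y : V) : Set V :=
  {u ∈ Uset G r x y | u ∈ G.neighborSet x \ G.neighborSet y}

/-- `U_y = {u ∈ U | u ∈ N(y) \\ N(x)}`. -/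
def Uyset {V : Type*} (G : SimpleGraph V) (r x y : V) : Set V :=
  {u ∈ Uset G r x y | u ∈ G.neighborSet y \ G.neighborSet x}

/-- `W_x = N_r̄(x) \\ N_r̄(y)`. -/
def Wx {V : Type*} (G : SimpleGraph V) (r x y : V) : Set V :=
  Nbar G r x \ Nbar G r y

/-- `W_y = N_r̄(y) \\ N_r̄(x)`. -/
def Wy {V : Type*} (G : SimpleGraph V) (r x y : V) : Set V :=
  Nbar G r y \ Nbar G r x

/-- `W_xy = N_r̄(x) ∩ N_r̄(y)`. -/
def Wxy {V : Type*} (G : SimpleGraph V) (r x y : V) : Set V :=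
  Nbar G r x ∩ Nbar G r y

/-- `C` is a connected component of the subgraph of `G` induced by `A`:
`C ⊆ A`, `G[C]` is connected (hence nonempty), and `C` is maximal with this property. -/
def IsCompOf {V : Type*} (G : SimpleGraph V) (A C : Set V) : Prop :=
  C ⊆ A ∧ (G.induce C).Connected ∧
    ∀ C' : Set V, C ⊆ C' → C' ⊆ A → (G.induce C').Connected → C' = C

/-- The neighborhood of the vertex set `C` in the graph `G − r`: all vertices other than
`r`, outside of `C`, having a neighbor in `C`. -/
def nbhdIn {V : Type*} (G : SimpleGraph V) (r : V) (C : Set V) : Set V :=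
  {w | w ≠ r ∧ w ∉ C ∧ ∃ c ∈ C, G.Adj c w}

/-! Let `z` be a neighbour of `u ∈ U` outside `N[r] ∪ N(x) ∪ N(y)`, and suppose `u` misses both
`x` and some `w ∈ W_x`. If `z ≁ w`, then `z - u - r - x - w` is an induced `P₅`. If `z ∼ w`, then
`w - z - u - r - y` is one when `u ≁ y`, and `x - w - z - u - y` is one when `u ∼ y`. The second
half of the first claim is the first half with `x` and `y` exchanged, and the remaining claims
are special cases. -/

lemma not_free_pathGraph_five {V : Type*} {G : SimpleGraph V} {a b c d e : V}
    (hab : G.Adj a b) (hbc : G.Adj b c) (hcd : G.Adj c d) (hde : G.Adj d e)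
    (hac : ¬ G.Adj a c) (had : ¬ G.Adj a d) (hae : ¬ G.Adj a e)
    (hbd : ¬ G.Adj b d) (hbe : ¬ G.Adj b e) (hce : ¬ G.Adj c e) :
    ¬ _root_.Free (pathGraph 5) G := by
  have nac : a ≠ c := by rintro rfl; exact had hcd
  have nad : a ≠ d := by rintro rfl; exact hac hcd.symm
  have nae : a ≠ e := by rintro rfl; exact had hde.symm
  have nbd : b ≠ d := by rintro rfl; exact hbe hde
  have nbe : b ≠ e := by rintro rfl; exact hbd hde.symm
  have nce : c ≠ e := by rintro rfl; exact hbe hbc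
  intro hfree
  refine hfree.false ⟨⟨![a, b, c, d, e], ?_⟩, ?_⟩
  · intro i j h
    fin_cases i <;> fin_cases j <;>
      simp_all [hab.ne, hbc.ne, hcd.ne, hde.ne, hab.ne.symm, hbc.ne.symm, hcd.ne.symm,
        hde.ne.symm, nac.symm, nad.symm, nae.symm, nbd.symm, nbe.symm, nce.symm]
  · intro i j
    change G.Adj (![a, b, c, d, e] i) (![a, b, c, d, e] j) ↔ _
    fin_cases i <;> fin_cases j <;> simp_all [pathGraph_adj, G.adj_comm]

section

variable {V : Type*} {G : SimpleGraph V} {r x y : V}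

lemma mem_Nbar {v w : V} : w ∈ Nbar G r v ↔ G.Adj v w ∧ w ≠ r ∧ ¬ G.Adj r w := by
  simp [Nbar, closedNbhd]

lemma Uset_comm : Uset G r x y = Uset G r y x := by
  simp only [Uset, Set.union_comm]

lemma adj_of_mem_Uset_of_mem_Wx (hP5 : _root_.Free (pathGraph 5) G)
    (hrx : G.Adj r x) (hry : G.Adj r y) (hxy : ¬ G.Adj x y)
    {u w : V} (hu : u ∈ Uset G r x y) (hux : ¬ G.Adj u x) (hw : w ∈ Wx G r x y) :
    G.Adj u w := by
  obtain ⟨hru, z, hz, hzxy⟩ := hu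
  have hxz : ¬ G.Adj x z := fun h => hzxy (Or.inl ⟨h, hz.2⟩)
  have hyz : ¬ G.Adj y z := fun h => hzxy (Or.inr ⟨h, hz.2⟩)
  have hyw : ¬ G.Adj y w := fun h => hw.2 ⟨h, hw.1.2⟩
  obtain ⟨huz, -, hrz⟩ := mem_Nbar.mp hz
  obtain ⟨hxw, -, hrw⟩ := mem_Nbar.mp hw.1
  have hru : G.Adj r u := hru
  by_contra huw
  by_cases hzw : G.Adj z w
  · by_cases huy : G.Adj u y
    · exact not_free_pathGraph_five hxw hzw.symm huz.symm huy hxz (mt G.adj_symm hux) hxy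
        (mt G.adj_symm huw) (mt G.adj_symm hyw) (mt G.adj_symm hyz) hP5
    · exact not_free_pathGraph_five hzw.symm huz.symm hru.symm hry (mt G.adj_symm huw)
        (mt G.adj_symm hrw) (mt G.adj_symm hyw) (mt G.adj_symm hrz) (mt G.adj_symm hyz) huy hP5
  · exact not_free_pathGraph_five huz.symm hru.symm hrx hxw (mt G.adj_symm hrz)
      (mt G.adj_symm hxz) hzw hux huw hrw hP5

end

theorem stmt_17_general {V : Type} (G : SimpleGraph V)
    (hP5 : _root_.Free (pathGraph 5) G)
    (r x y : V) (hrx : G.Adj r x) (hry : G.Adj r y) (hnadj : ¬ G.Adj x y) :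
    (∀ u ∈ Uset G r x y,
      (¬ G.Adj u x → ∀ w ∈ Wx G r x y, G.Adj u w) ∧
      (¬ G.Adj u y → ∀ w ∈ Wy G r x y, G.Adj u w)) ∧
    (∀ u ∈ U0set G r x y, ∀ w ∈ Wx G r x y ∪ Wy G r x y, G.Adj u w) ∧
    (∀ u ∈ Uxset G r x y, ∀ w ∈ Wy G r x y, G.Adj u w) ∧
    (∀ u ∈ Uyset G r x y, ∀ w ∈ Wx G r x y, G.Adj u w) := by
  have hWx : ∀ u ∈ Uset G r x y, ¬ G.Adj u x → ∀ w ∈ Wx G r x y, G.Adj u w :=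
    fun u hu hux w hw => adj_of_mem_Uset_of_mem_Wx hP5 hrx hry hnadj hu hux hw
  have hWy : ∀ u ∈ Uset G r x y, ¬ G.Adj u y → ∀ w ∈ Wy G r x y, G.Adj u w :=
    fun u hu huy w hw => adj_of_mem_Uset_of_mem_Wx hP5 hry hrx (mt G.adj_symm hnadj)
      (Uset_comm ▸ hu) huy hw
  refine ⟨fun u hu => ⟨hWx u hu, hWy u hu⟩, ?_, ?_, ?_⟩
  · rintro u ⟨hu, hu0⟩ w (hw | hw)
    · exact hWx u hu (fun h => hu0 (Or.inl h.symm)) w hw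
    · exact hWy u hu (fun h => hu0 (Or.inr h.symm)) w hw
  · rintro u ⟨hu, -, hy⟩ w hw
    exact hWy u hu (mt G.adj_symm hy) w hw
  · rintro u ⟨hu, -, hx⟩ w hw
    exact hWx u hu (mt G.adj_symm hx) w hw

/-- Let `G` be `P₅`-free, `r ∈ V(G)`, and `x, y` two distinct nonadjacent
neighbors of `r`. Then for every `u ∈ U`: if `u` is not adjacent to `x`, then `u` is
complete to `W_x`, and if `u` is not adjacent to `y`, then `u` is complete to `W_y`.
In particular, `U₀` is complete to `W_x ∪ W_y`, `U_x` is complete to `W_y`, and `U_y`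
is complete to `W_x`. -/
theorem stmt_17 {V : Type} [Fintype V] (G : SimpleGraph V)
    (hP5 : _root_.Free (pathGraph 5) G)
    (r x y : V) (hrx : G.Adj r x) (hry : G.Adj r y) (hxy : x ≠ y) (hnadj : ¬ G.Adj x y) :
    (∀ u ∈ Uset G r x y,
      (¬ G.Adj u x → ∀ w ∈ Wx G r x y, G.Adj u w) ∧
      (¬ G.Adj u y → ∀ w ∈ Wy G r x y, G.Adj u w)) ∧
    (∀ u ∈ U0set G r x y, ∀ w ∈ Wx G r x y ∪ Wy G r x y, G.Adj u w) ∧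
    (∀ u ∈ Uxset G r x y, ∀ w ∈ Wy G r x y, G.Adj u w) ∧
    (∀ u ∈ Uyset G r x y, ∀ w ∈ Wx G r x y, G.Adj u w) :=
  stmt_17_general G hP5 r x y hrx hry hnadj
end

section
/- Let G be a P₅-free graph, let r ∈ V(G), and let x, y be two distinct nonadjacent neighbors of r. Then every connected component C of G' − M is complete to N(C) ∩ W_xy. -/
open SimpleGraph

/-
A vertex `c ∈ C` missing some `w ∈ W_xy ∩ N(C)` yields, along a path in `C` from `c` to a
neighbour of `w`, an edge `c₁c₂` of `C` with `c₁w ∉ E`, `c₂w ∈ E`. As `C` avoids `N[r]` and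
`N_r̄(x)`, and `w ∈ N_r̄(x)`, the vertices `r, x, w, c₂, c₁` induce a `P₅`.
-/

section

variable {V : Type*} {G : SimpleGraph V}

-- No distinctness hypotheses: the adjacency pattern forces the five vertices to be distinct.
theorem Free.pathGraph_five_elim (hG : _root_.Free (pathGraph 5) G) {a b c d e : V}
    (hab : G.Adj a b) (hbc : G.Adj b c) (hcd : G.Adj c d) (hde : G.Adj d e)
    (hac : ¬ G.Adj a c) (had : ¬ G.Adj a d) (hae : ¬ G.Adj a e)
    (hbd : ¬ G.Adj b d) (hbe : ¬ G.Adj b e) (hce : ¬ G.Adj c e) : False := by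
  have hne : a ≠ c ∧ a ≠ d ∧ a ≠ e ∧ b ≠ d ∧ b ≠ e ∧ c ≠ e := by
    refine ⟨?_, ?_, ?_, ?_, ?_, ?_⟩ <;> rintro rfl <;> simp_all [G.adj_comm]
  refine hG.elim' ⟨⟨![a, b, c, d, e], fun i j hij => ?_⟩, fun {i j} => ?_⟩
  · fin_cases i <;> fin_cases j <;> simp_all [hab.ne, hbc.ne, hcd.ne, hde.ne, eq_comm]
  · change G.Adj (![a, b, c, d, e] i) (![a, b, c, d, e] j) ↔ _
    fin_cases i <;> fin_cases j <;> simp_all [pathGraph_adj, G.adj_comm]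

theorem exists_adj_not_and_of_preconnected_induce {C : Set V} (hC : (G.induce C).Preconnected)
    {P : V → Prop} {a b : V} (ha : a ∈ C) (hb : b ∈ C) (hPa : ¬ P a) (hPb : P b) :
    ∃ c₁ ∈ C, ∃ c₂ ∈ C, G.Adj c₁ c₂ ∧ ¬ P c₁ ∧ P c₂ := by
  obtain ⟨p⟩ := hC ⟨a, ha⟩ ⟨b, hb⟩
  obtain ⟨d, -, hd₁, hd₂⟩ := p.exists_boundary_dart {z | ¬ P z} hPa (not_not.2 hPb)
  exact ⟨d.fst, d.fst.2, d.snd, d.snd.2, d.adj, hd₁, not_not.1 hd₂⟩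

theorem adj_and_not_adj_of_mem_Nbar {r x w : V} (hw : w ∈ Nbar G r x) :
    G.Adj x w ∧ ¬ G.Adj r w :=
  ⟨hw.1, fun h => hw.2 (Set.mem_insert_of_mem _ h)⟩

theorem not_adj_of_notMem_Mset {r x y z : V}
    (hz : z ∉ {r} ∪ Mset G r x y) : ¬ G.Adj r z ∧ ¬ G.Adj x z := by
  simp only [Mset, Nbar, closedNbhd, Set.mem_union, Set.mem_singleton_iff, Set.mem_sdiff,
    Set.mem_insert_iff, mem_neighborSet, not_or, not_and, not_not] at hz
  obtain ⟨hzr, ⟨hrz, hx⟩, -⟩ := hz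
  exact ⟨hrz, fun hxz => hrz (hx hxz hzr)⟩

end

theorem stmt_18_general {V : Type} (G : SimpleGraph V)
    (hP5 : _root_.Free (pathGraph 5) G)
    (r x y : V) (hrx : G.Adj r x)
    (C : Set V) (hC : IsCompOf G (({r} ∪ Mset G r x y)ᶜ) C) :
    ∀ c ∈ C, ∀ w ∈ nbhdIn G r C ∩ Wxy G r x y, G.Adj c w := by
  rintro c hc w ⟨⟨-, -, c', hc', hc'w⟩, hwx, -⟩
  by_contra hcw
  obtain ⟨c₁, hc₁, c₂, hc₂, h₁₂, h₁w, h₂w⟩ :=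
    exists_adj_not_and_of_preconnected_induce (P := (G.Adj · w)) hC.2.1.preconnected hc hc'
      hcw hc'w
  obtain ⟨hxw, hrw⟩ := adj_and_not_adj_of_mem_Nbar hwx
  obtain ⟨hrc₁, hxc₁⟩ := not_adj_of_notMem_Mset (hC.1 hc₁)
  obtain ⟨hrc₂, hxc₂⟩ := not_adj_of_notMem_Mset (hC.1 hc₂)
  exact hP5.pathGraph_five_elim hrx hxw h₂w.symm h₁₂.symm hrw hrc₂ hrc₁ hxc₂ hxc₁
    (fun h => h₁w h.symm)

/-- Let `G` be `P₅`-free, `r ∈ V(G)`, and `x, y` two distinct nonadjacent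
neighbors of `r`. Then every connected component `C` of `G' − M` is complete to
`N(C) ∩ W_xy`. -/
theorem stmt_18 {V : Type} [Fintype V] (G : SimpleGraph V)
    (hP5 : _root_.Free (pathGraph 5) G)
    (r x y : V) (hrx : G.Adj r x) (hry : G.Adj r y) (hxy : x ≠ y) (hnadj : ¬ G.Adj x y)
    (C : Set V) (hC : IsCompOf G (({r} ∪ Mset G r x y)ᶜ) C) :
    ∀ c ∈ C, ∀ w ∈ nbhdIn G r C ∩ Wxy G r x y, G.Adj c w :=
  stmt_18_general G hP5 r x y hrx C hC
end
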